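/- For α a root of α^2 - 2α - 1 = 0 (i.e., α = 1 ± √2), the quartic F_α(z0,z1,z3) = z0^4 + z1^4 + (1+α^4) z3^4 - 6(α^2 z3^4 + (α^2+1)(z0^2+z1^2) z3^2 + z0^2 z1^2) has (0,0,1) as its only singular point up to scaling: if F_α and its three partial derivatives vanish at (z0,z1,z3) ∈ ℂ^3 with (z0,z1,z3) ≠ 0, then z0 = z1 = 0. -/

import Mathlib

noncomputable def Fq (t z0 z1 z3 : ℂ) : ℂ :=
  z0^4 + z1^4 + (1 + t^4) * z3^4
    - 6 * (t^2 * z3^4 + (t^2 + 1) * (z0^2 + z1^2) * z3^2 + z0^2 * z1^2)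

noncomputable def Fq0 (t z0 z1 z3 : ℂ) : ℂ :=
  4*z0^3 - 12*(t^2 + 1)*z0*z3^2 - 12*z0*z1^2

noncomputable def Fq1 (t z0 z1 z3 : ℂ) : ℂ :=
  4*z1^3 - 12*(t^2 + 1)*z1*z3^2 - 12*z1*z0^2

noncomputable def Fq3 (t z0 z1 z3 : ℂ) : ℂ :=
  4*(1 + t^4)*z3^3 - 24*t^2*z3^3 - 12*(t^2 + 1)*(z0^2 + z1^2)*z3

/-!
The relation `α² = 2α + 1` kills the `z3⁴` coefficient of `F_α`, since
`1 + α⁴ - 6α² = (α² - 2α - 1)(α² + 2α - 1)`. Hence `∂F/∂z3 = -12(α² + 1)(z0² + z1²) z3`, and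
`α² + 1 = 2(α + 1) ≠ 0` gives `(z0² + z1²) z3 = 0`. With `w = (α² + 1) z3²` the other two
partials are those of the binary quartic `x⁴ + y⁴ - 6x²y² - 6w(x² + y²)`, and `w (x² + y²) = 0`
forces every critical point of it to be the origin.
-/

section CommRing

variable {R : Type*} [CommRing R] [IsDomain R]

lemma sq_add_one_ne_zero_of_sq_eq_two_mul_add_one [NeZero (2 : R)] {a : R}
    (ha : a ^ 2 = 2 * a + 1) : a ^ 2 + 1 ≠ 0 := by
  intro h
  have ha1 : a + 1 = 0 :=
    (mul_eq_zero.mp (by linear_combination h - ha : 2 * (a + 1) = 0)).resolve_left two_ne_zero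
  exact two_ne_zero (by linear_combination h - (a - 1) * ha1 : (2 : R) = 0)

lemma eq_zero_of_critical_of_left_eq_zero {x y w : R} (hy : y * (y ^ 2 - 3 * x ^ 2 - 3 * w) = 0)
    (hw : w * (x ^ 2 + y ^ 2) = 0) (hx : x = 0) : y = 0 := by
  subst hx
  by_contra hy0
  have hw0 : w = 0 := by simpa [hy0] using hw
  subst hw0
  exact hy0 (pow_eq_zero_iff (n := 3) (by norm_num) |>.mp (by linear_combination hy))

lemma left_eq_zero_or_right_eq_zero_of_critical [NeZero (2 : R)] {x y w : R}
    (hx : x * (x ^ 2 - 3 * y ^ 2 - 3 * w) = 0) (hy : y * (y ^ 2 - 3 * x ^ 2 - 3 * w) = 0)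
    (hw : w * (x ^ 2 + y ^ 2) = 0) : x = 0 ∨ y = 0 := by
  by_contra! ⟨hx0, hy0⟩
  have ex := (mul_eq_zero.mp hx).resolve_left hx0
  have ey := (mul_eq_zero.mp hy).resolve_left hy0
  have hxy : x ^ 2 - y ^ 2 = 0 :=
    (mul_eq_zero.mp (by linear_combination ex - ey : (2 : R) ^ 2 * (x ^ 2 - y ^ 2) = 0)).resolve_left
      (pow_ne_zero 2 two_ne_zero)
  have h2x : 2 * x ^ 2 ≠ 0 := mul_ne_zero two_ne_zero (pow_ne_zero 2 hx0)
  have hw0 : w = 0 :=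
    (mul_eq_zero.mp (by linear_combination hw + w * hxy : w * (2 * x ^ 2) = 0)).resolve_right h2x
  exact h2x (by linear_combination -ex + 3 * hxy - 3 * hw0)

lemma eq_zero_and_eq_zero_of_critical [NeZero (2 : R)] {x y w : R}
    (hx : x * (x ^ 2 - 3 * y ^ 2 - 3 * w) = 0) (hy : y * (y ^ 2 - 3 * x ^ 2 - 3 * w) = 0)
    (hw : w * (x ^ 2 + y ^ 2) = 0) : x = 0 ∧ y = 0 := by
  have hw' : w * (y ^ 2 + x ^ 2) = 0 := by linear_combination hw
  rcases left_eq_zero_or_right_eq_zero_of_critical hx hy hw with hx0 | hy0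
  · exact ⟨hx0, eq_zero_of_critical_of_left_eq_zero hy hw hx0⟩
  · exact ⟨eq_zero_of_critical_of_left_eq_zero hx hw' hy0, hy0⟩

end CommRing

lemma Fq3_eq_of_sq_eq_two_mul_add_one {α : ℂ} (hα : α ^ 2 = 2 * α + 1) (z0 z1 z3 : ℂ) :
    Fq3 α z0 z1 z3 = -12 * (α ^ 2 + 1) * ((z0 ^ 2 + z1 ^ 2) * z3) := by
  unfold Fq3
  linear_combination 4 * (α ^ 2 + 2 * α - 1) * z3 ^ 3 * hα

theorem unique_singularity_g1_general (α z0 z1 z3 : ℂ) (hα : α^2 = 2*α + 1)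
    (h0 : Fq0 α z0 z1 z3 = 0) (h1 : Fq1 α z0 z1 z3 = 0) (h3 : Fq3 α z0 z1 z3 = 0) :
    z0 = 0 ∧ z1 = 0 := by
  have hc : α ^ 2 + 1 ≠ 0 := sq_add_one_ne_zero_of_sq_eq_two_mul_add_one hα
  have hS : (z0 ^ 2 + z1 ^ 2) * z3 = 0 := by
    rw [Fq3_eq_of_sq_eq_two_mul_add_one hα] at h3
    simpa [hc] using h3
  unfold Fq0 at h0
  unfold Fq1 at h1
  refine eq_zero_and_eq_zero_of_critical (w := (α ^ 2 + 1) * z3 ^ 2) ?_ ?_ ?_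
  · linear_combination h0 / 4
  · linear_combination h1 / 4
  · linear_combination (α ^ 2 + 1) * z3 * hS

/-- For `α` with `α^2 = 2α + 1` (i.e. `α = 1 ± √2`), the only singular point of the
quartic `F_α = 0` up to scaling is `(0:0:1)`: any nonzero common zero of `F_α` and its
partial derivatives has `z0 = z1 = 0`. -/
theorem unique_singularity_g1 (α z0 z1 z3 : ℂ) (hα : α^2 = 2*α + 1)
    (hF : Fq α z0 z1 z3 = 0)
    (h0 : Fq0 α z0 z1 z3 = 0) (h1 : Fq1 α z0 z1 z3 = 0) (h3 : Fq3 α z0 z1 z3 = 0)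
    (hne : (z0, z1, z3) ≠ (0, 0, 0)) :
    z0 = 0 ∧ z1 = 0 :=
  unique_singularity_g1_general α z0 z1 z3 hα h0 h1 h3
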